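/- Let k ∈ SO(4) and a = diag(a₁,a₂,a₃,a₄) with all aᵢ > 0 and a₁a₂a₃a₄ = 1, and let n be a lower unitriangular 4×4 matrix with subdiagonal entries n₁ = n₂₁, n₂ = n₃₁, n₃ = n₃₂, n₄ = n₄₁, n₅ = n₄₂, n₆ = n₄₃. If g = k a n satisfies g e₃ = α e₃ and ᵗg⁻¹ e₃ = γ e₃ for nonzero scalars α, γ, then n₂ = n₃ = n₆ = 0. -/
import Mathlib


open Matrix

/-- Key computation in the Iwasawa decomposition lemma: if g = k·a·n with
k ∈ SO(4), a diagonal with positive entries and determinant 1, n lower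
unitriangular, and g e₃ = α e₃, ᵗg⁻¹ e₃ = γ e₃ with α, γ ≠ 0, then the entries
n₃₁ = n 2 0, n₃₂ = n 2 1 and n₄₃ = n 3 2 of n vanish. -/
theorem iwasawa_entries_vanish (k a n : Matrix (Fin 4) (Fin 4) ℝ)
    (hk : kᵀ * k = 1 ∧ k.det = 1)
    (ha : (∀ i j, i ≠ j → a i j = 0) ∧ (∀ i, 0 < a i i) ∧ a.det = 1)
    (hn : (∀ i, n i i = 1) ∧ (∀ i j : Fin 4, i < j → n i j = 0))
    (α γ : ℝ) (hα : α ≠ 0) (hγ : γ ≠ 0)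
    (h1 : (k * a * n).mulVec (Pi.single 2 1) = α • (Pi.single 2 1 : Fin 4 → ℝ))
    (h2 : ((k * a * n)⁻¹)ᵀ.mulVec (Pi.single 2 1) = γ • (Pi.single 2 1 : Fin 4 → ℝ)) :
    n 2 0 = 0 ∧ n 2 1 = 0 ∧ n 3 2 = 0 := by
  obtain ⟨hk1, hk2⟩ := hk
  obtain ⟨had, hap, hadet⟩ := ha
  obtain ⟨hnd, hnl⟩ := hn
  have hndet : n.det = 1 := by
    rw [Matrix.det_of_lowerTriangular n hnl]
    simp [hnd]
  have hgu : IsUnit (k * a * n).det := by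
    simp [Matrix.det_mul, hk2, hadet, hndet]
  -- step 2 : gᵀ e = γ⁻¹ • e
  have h2' : (k * a * n)ᵀ.mulVec (Pi.single 2 1) = γ⁻¹ • (Pi.single 2 1 : Fin 4 → ℝ) := by
    have h := congrArg (fun v => (k * a * n)ᵀ.mulVec v) h2
    simp only [Matrix.mulVec_mulVec, ← Matrix.transpose_mul, Matrix.nonsing_inv_mul _ hgu,
      Matrix.transpose_one, Matrix.one_mulVec, Matrix.mulVec_smul] at h
    exact (eq_inv_smul_iff₀ hγ).2 h.symm
  -- step 3 : (a*n) e = α • kᵀ e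
  have h1' : (a * n).mulVec (Pi.single 2 1) = α • kᵀ.mulVec (Pi.single 2 1) := by
    have h := congrArg (fun v => kᵀ.mulVec v) h1
    simp only [Matrix.mulVec_mulVec, ← Matrix.mul_assoc, hk1, Matrix.one_mul,
      Matrix.mulVec_smul] at h
    exact h
  -- master equation
  have M : nᵀ.mulVec (aᵀ.mulVec ((a * n).mulVec (Pi.single 2 1)))
      = (α * γ⁻¹) • (Pi.single 2 1 : Fin 4 → ℝ) := by
    calc nᵀ.mulVec (aᵀ.mulVec ((a * n).mulVec (Pi.single 2 1)))
        = nᵀ.mulVec (aᵀ.mulVec (α • kᵀ.mulVec (Pi.single 2 1))) := by rw [h1']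
      _ = α • ((nᵀ * (aᵀ * kᵀ)).mulVec (Pi.single 2 1)) := by
            simp only [Matrix.mulVec_smul, Matrix.mulVec_mulVec]
      _ = α • ((k * a * n)ᵀ.mulVec (Pi.single 2 1)) := by
            rw [Matrix.transpose_mul, Matrix.transpose_mul]
      _ = (α * γ⁻¹) • (Pi.single 2 1 : Fin 4 → ℝ) := by rw [h2', smul_smul]
  have e3 := congrFun M 3
  have e0 := congrFun M 0
  have e1 := congrFun M 1
  simp [Matrix.mulVec, Matrix.mul_apply, dotProduct, Fin.sum_univ_four,
    Matrix.transpose_apply, Pi.single_apply, hnd,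
    hnl 0 1 (by decide), hnl 0 2 (by decide), hnl 0 3 (by decide),
    hnl 1 2 (by decide), hnl 1 3 (by decide), hnl 2 3 (by decide),
    had 0 1 (by decide), had 0 2 (by decide), had 0 3 (by decide),
    had 1 0 (by decide), had 1 2 (by decide), had 1 3 (by decide),
    had 2 0 (by decide), had 2 1 (by decide), had 2 3 (by decide),
    had 3 0 (by decide), had 3 1 (by decide), had 3 2 (by decide)] at e3 e0 e1
  have ha2 := (hap 2).ne'
  have ha3 := (hap 3).ne'
  have hn6 : n 3 2 = 0 := e3.resolve_left ha3
  rw [hn6] at e0 e1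
  refine ⟨?_, ?_, hn6⟩
  · have h0 : n 2 0 * (a 2 2 * a 2 2) = 0 := by linarith
    exact (mul_eq_zero.1 h0).resolve_right (mul_ne_zero ha2 ha2)
  · have h0 : n 2 1 * (a 2 2 * a 2 2) = 0 := by linarith
    exact (mul_eq_zero.1 h0).resolve_right (mul_ne_zero ha2 ha2)
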